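/- For every n, the set pairs(n) is an interval of integers: there exist a ≤ b with pairs(n) = {a, a+1, …, b}; and for every n the set PAIRS(2n) is likewise an interval of integers. -/

import Mathlib

open Fin.NatCast in
/-- The Thue–Morse sequence: sum of binary digits of `n`, mod 2. -/
def tm (n : ℕ) : Fin 2 := ((Nat.digits 2 n).sum : Fin 2)

/-- The factor of the Thue–Morse word of length `n` starting at position `i`. -/
def tmWord (i n : ℕ) : List (Fin 2) := (List.range n).map (fun j => tm (i + j))

/-- A binary word is a factor of the Thue–Morse word. -/
def IsFactor (w : List (Fin 2)) : Prop := ∃ i : ℕ, w = tmWord i w.length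

/-- Number of occurrences of the word `x` as a factor of `u`. -/
def occCount (u x : List (Fin 2)) : ℕ :=
  ((List.range u.length).filter (fun i => (u.drop i).take x.length = x)).length

/-- Two binary words (of equal length) are 2-abelian equivalent: same first letter,
same last letter, and the same number of occurrences of every word of length 2. -/
def TwoAbelianEquiv (u v : List (Fin 2)) : Prop :=
  u.length = v.length ∧ u.take 1 = v.take 1 ∧
  u.drop (u.length - 1) = v.drop (v.length - 1) ∧
  ∀ x : List (Fin 2), x.length = 2 → occCount u x = occCount v x

/-- `P n` is the 2-abelian complexity of the Thue–Morse word: the number of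
2-abelian equivalence classes of factors of length `n`. -/
noncomputable def P (n : ℕ) : ℕ :=
  Nat.card (Quot (fun u v : {w : List (Fin 2) // w.length = n ∧ IsFactor w} =>
    TwoAbelianEquiv u.1 v.1))

/-- `pword w` counts the pairs in `w`: the total number of occurrences of `00` and `11`. -/
def pword (w : List (Fin 2)) : ℕ := occCount w [0, 0] + occCount w [1, 1]

/-- The set of possible pair counts of Thue–Morse factors of length `n`. -/
def pairs (n : ℕ) : Set ℕ :=
  { m | ∃ w : List (Fin 2), w.length = n ∧ IsFactor w ∧ pword w = m }

/-- The set of possible pair counts of Thue–Morse factors of length `n`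
occurring at some odd position (pure odd factors). -/
def PAIRS (n : ℕ) : Set ℕ := { m | ∃ i : ℕ, i % 2 = 1 ∧ pword (tmWord i n) = m }

/-!
Writing `t` for the Thue–Morse word, the pair count of the factor of length `m + 1` at `i` is the
number of `j < m` with `t (i + j) = t (i + j + 1)`. Sliding the window one step to the right loses
at most one pair and gains at most one, so as a function of the start position the pair count is a
bounded sequence of naturals moving by at most one per step, and such a sequence takes every value
between its minimum and maximum. For odd starts the window slides by two, and since
`t (2k) ≠ t (2k + 1)` no pair starts at an even position, which again limits the change to one.
-/

open Finset

theorem Nat.exists_eq_of_mem_uIcc {f : ℕ → ℕ} (hf : ∀ i, f (i + 1) ≤ f i + 1 ∧ f i ≤ f (i + 1) + 1)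
    {p q c : ℕ} (hpq : p ≤ q) (hc : c ∈ Set.uIcc (f p) (f q)) : ∃ k, f k = c := by
  induction q, hpq using Nat.le_induction with
  | base => exact ⟨p, (by simpa using hc : c = f p).symm⟩
  | succ q _ ih =>
    by_cases hcq : c ∈ Set.uIcc (f p) (f q)
    · exact ih hcq
    · refine ⟨q + 1, ?_⟩
      have := hf q
      simp only [Set.mem_uIcc] at hc hcq
      omega

theorem Nat.exists_range_eq_Icc {f : ℕ → ℕ} (hbdd : BddAbove (Set.range f))
    (hf : ∀ i, f (i + 1) ≤ f i + 1 ∧ f i ≤ f (i + 1) + 1) :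
    ∃ a b, a ≤ b ∧ Set.range f = Set.Icc a b := by
  have hne : (Set.range f).Nonempty := Set.range_nonempty f
  have hconn : (Set.range f).OrdConnected := by
    refine Set.ordConnected_iff_uIcc_subset.2 ?_
    rintro _ ⟨p, rfl⟩ _ ⟨q, rfl⟩ c hc
    rcases le_total p q with hpq | hqp
    · exact Nat.exists_eq_of_mem_uIcc hf hpq hc
    · exact Nat.exists_eq_of_mem_uIcc hf hqp (Set.uIcc_comm (f p) (f q) ▸ hc)
  exact ⟨_, _, csInf_le_csSup hne (OrderBot.bddBelow _) hbdd,
    (hne.ordConnected_iff_of_bdd (OrderBot.bddBelow _) hbdd).1 hconn⟩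

theorem tm_two_mul (m : ℕ) : tm (2 * m) = tm m := by
  rcases Nat.eq_zero_or_pos m with rfl | hm
  · rfl
  · simp [tm, Nat.digits_def' (b := 2) (by norm_num) (by omega : 0 < 2 * m)]

theorem tm_two_mul_add_one (m : ℕ) : tm (2 * m + 1) = tm m + 1 := by
  have hdiv : (2 * m + 1) / 2 = m := by omega
  simp only [tm, Nat.digits_def' (b := 2) (by norm_num) (by omega : 0 < 2 * m + 1), hdiv,
    Nat.mul_add_mod_self_left, Nat.reduceMod, List.sum_cons]
  simp [Fin.ext_iff, Fin.val_add, Fin.val_natCast, add_comm]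

theorem tm_two_mul_ne (m : ℕ) : tm (2 * m) ≠ tm (2 * m + 1) := by
  rw [tm_two_mul, tm_two_mul_add_one]
  generalize tm m = x
  fin_cases x <;> decide

@[simp]
theorem tmWord_length (i n : ℕ) : (tmWord i n).length = n := by simp [tmWord]

theorem occCount_le_length (u x : List (Fin 2)) : occCount u x ≤ u.length :=
  (List.length_filter_le _ _).trans (List.length_range).le

theorem pword_le_two_mul_length (w : List (Fin 2)) : pword w ≤ 2 * w.length := by
  have := occCount_le_length w [0, 0]
  have := occCount_le_length w [1, 1]
  unfold pword
  omega

def tmPairAt (k : ℕ) : ℕ := if tm k = tm (k + 1) then 1 else 0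

def tmPairCount (i m : ℕ) : ℕ := ∑ j ∈ range m, tmPairAt (i + j)

theorem tmPairAt_le_one (k : ℕ) : tmPairAt k ≤ 1 := by
  unfold tmPairAt; split_ifs <;> omega

theorem tmPairAt_two_mul (k : ℕ) : tmPairAt (2 * k) = 0 :=
  if_neg (tm_two_mul_ne k)

theorem tmPairCount_add_tmPairAt (i m : ℕ) :
    tmPairCount i m + tmPairAt (i + m) = tmPairAt i + tmPairCount (i + 1) m := by
  unfold tmPairCount
  rw [← sum_range_succ (fun j => tmPairAt (i + j)), sum_range_succ', add_zero, add_comm]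
  simp only [add_assoc, add_comm 1]

theorem tmPairCount_succ_start (i m : ℕ) :
    tmPairCount (i + 1) m ≤ tmPairCount i m + 1 ∧ tmPairCount i m ≤ tmPairCount (i + 1) m + 1 := by
  have := tmPairCount_add_tmPairAt i m
  have := tmPairAt_le_one i
  have := tmPairAt_le_one (i + m)
  omega

/-- Between two consecutive odd starts the window gains or loses at most one pair, because the
pairs at the even positions `2 * k + 2` and `2 * k + 2 * l + 2` are absent. -/
theorem tmPairCount_odd_succ_start (k l : ℕ) :
    tmPairCount (2 * k + 3) (2 * l + 1) ≤ tmPairCount (2 * k + 1) (2 * l + 1) + 1 ∧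
      tmPairCount (2 * k + 1) (2 * l + 1) ≤ tmPairCount (2 * k + 3) (2 * l + 1) + 1 := by
  have h₁ : tmPairCount (2 * k + 1) (2 * l + 1) =
      tmPairAt (2 * k + 1) + tmPairCount (2 * k + 2) (2 * l + 1) := by
    have := tmPairCount_add_tmPairAt (2 * k + 1) (2 * l + 1)
    rwa [show 2 * k + 1 + (2 * l + 1) = 2 * (k + l + 1) by ring, tmPairAt_two_mul,
      add_zero] at this
  have h₂ : tmPairCount (2 * k + 2) (2 * l + 1) + tmPairAt (2 * k + 2 * l + 3) =
      tmPairCount (2 * k + 3) (2 * l + 1) := by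
    have := tmPairCount_add_tmPairAt (2 * (k + 1)) (2 * l + 1)
    rwa [tmPairAt_two_mul, zero_add, show 2 * (k + 1) + (2 * l + 1) = 2 * k + 2 * l + 3 by ring,
      show 2 * (k + 1) = 2 * k + 2 by ring] at this
  have := tmPairAt_le_one (2 * k + 1)
  have := tmPairAt_le_one (2 * k + 2 * l + 3)
  omega

theorem occCount_eq_sum (u x : List (Fin 2)) :
    occCount u x = ∑ j ∈ range u.length, if (u.drop j).take x.length = x then 1 else 0 := by
  rw [← card_filter]; rfl

theorem tmWord_drop_take_two {i n j : ℕ} (h : j + 1 < n) :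
    ((tmWord i n).drop j).take 2 = [tm (i + j), tm (i + j + 1)] := by
  apply List.ext_getElem
  · simp; omega
  · intro k hk _
    simp only [List.length_take, List.length_drop, tmWord_length] at hk
    match k, hk with
    | 0, _ => simp [tmWord]
    | 1, _ => simp [tmWord, add_assoc]

theorem occCount_tmWord_succ (i m : ℕ) (a : Fin 2) :
    occCount (tmWord i (m + 1)) [a, a] =
      ∑ j ∈ range m, if tm (i + j) = a ∧ tm (i + j + 1) = a then 1 else 0 := by
  have hlast : ((tmWord i (m + 1)).drop m).take 2 ≠ [a, a] := by
    intro h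
    simpa using congrArg List.length h
  rw [occCount_eq_sum, tmWord_length, sum_range_succ]
  simp only [List.length_cons, List.length_nil, Nat.reduceAdd, if_neg hlast, add_zero]
  refine sum_congr rfl fun j hj => ?_
  simp [tmWord_drop_take_two (show j + 1 < m + 1 by simpa using hj)]

theorem pword_tmWord (i n : ℕ) : pword (tmWord i n) = tmPairCount i (n - 1) := by
  rcases n with _ | m
  · rfl
  rw [pword, occCount_tmWord_succ, occCount_tmWord_succ, ← sum_add_distrib, Nat.add_sub_cancel]
  refine sum_congr rfl fun j _ => ?_
  unfold tmPairAt
  generalize tm (i + j) = x, tm (i + j + 1) = y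
  fin_cases x <;> fin_cases y <;> simp

theorem pword_tmWord_succ_start (n i : ℕ) :
    pword (tmWord (i + 1) n) ≤ pword (tmWord i n) + 1 ∧
      pword (tmWord i n) ≤ pword (tmWord (i + 1) n) + 1 := by
  simpa only [pword_tmWord] using tmPairCount_succ_start i (n - 1)

theorem pword_tmWord_odd_succ_start (n k : ℕ) :
    pword (tmWord (2 * (k + 1) + 1) (2 * n)) ≤ pword (tmWord (2 * k + 1) (2 * n)) + 1 ∧
      pword (tmWord (2 * k + 1) (2 * n)) ≤ pword (tmWord (2 * (k + 1) + 1) (2 * n)) + 1 := by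
  rcases n with _ | l
  · simp [pword_tmWord, tmPairCount]
  · rw [pword_tmWord, pword_tmWord, show 2 * (l + 1) - 1 = 2 * l + 1 by omega,
      show 2 * (k + 1) + 1 = 2 * k + 3 by ring]
    exact tmPairCount_odd_succ_start k l

theorem bddAbove_range_pword_tmWord (n : ℕ) (start : ℕ → ℕ) :
    BddAbove (Set.range fun k => pword (tmWord (start k) n)) :=
  ⟨2 * n, by
    rintro _ ⟨k, rfl⟩
    simpa using pword_le_two_mul_length (tmWord (start k) n)⟩

theorem pairs_eq_range (n : ℕ) : pairs n = Set.range fun i => pword (tmWord i n) := by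
  ext m
  constructor
  · rintro ⟨w, rfl, ⟨i, hw⟩, rfl⟩
    exact ⟨i, congrArg pword hw.symm⟩
  · rintro ⟨i, rfl⟩
    exact ⟨tmWord i n, tmWord_length i n, ⟨i, by rw [tmWord_length]⟩, rfl⟩

theorem PAIRS_eq_range (n : ℕ) : PAIRS n = Set.range fun k => pword (tmWord (2 * k + 1) n) := by
  ext m
  constructor
  · rintro ⟨i, hi, rfl⟩
    exact ⟨i / 2, by simp only [show 2 * (i / 2) + 1 = i by omega]⟩
  · rintro ⟨k, rfl⟩
    exact ⟨2 * k + 1, by omega, rfl⟩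

theorem thueMorse_pairs_is_interval (n : ℕ) :
    (∃ a b : ℕ, a ≤ b ∧ pairs n = Set.Icc a b) ∧
    (∃ a b : ℕ, a ≤ b ∧ PAIRS (2 * n) = Set.Icc a b) := by
  rw [pairs_eq_range, PAIRS_eq_range]
  exact ⟨Nat.exists_range_eq_Icc (bddAbove_range_pword_tmWord n id) (pword_tmWord_succ_start n),
    Nat.exists_range_eq_Icc (bddAbove_range_pword_tmWord _ _) (pword_tmWord_odd_succ_start n)⟩
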